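/- Let f : ℝ → ℝ be N times continuously differentiable with bounded N-th derivative, and let φ be compactly supported on [0,3N−1], bounded, and reproduce polynomials of degree ≤ N−1 via shifted samples as in the operator P̃^m f(x) = ∑_k f((M₁+k)/2^m) φ(2^m x − k). Then there is a constant C depending only on φ, N and ‖f^{(N)}‖_∞ such that |f(x) − P̃^m f(x)| ≤ C · 2^{−mN} for all x ∈ ℝ. -/

import Mathlib

/-!
Fix `x`, put `t = 2^m x` and `yₖ = (M₁ + k) / 2^m`, and let `P` be the Taylor polynomial of `f` of
degree `N - 1` at `x`. Polynomial reproduction gives `f x = P x = ∑ₖ P(yₖ) φ(t - k)`, so the error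
is `∑ₖ (P(yₖ) - f(yₖ)) φ(t - k)`. As `φ` vanishes outside `[0, 3N - 1]`, only the at most `3N`
integers `k ∈ [t - 3N + 1, t]` contribute, and for those `|yₖ - x| ≤ (|M₁| + 3N - 1) / 2^m`, so
Taylor's theorem bounds each term by `K |yₖ - x|^N / N! · B = O(2^{-mN})`.
-/

open Polynomial Finset

noncomputable def taylorPolynomial (f : ℝ → ℝ) (n : ℕ) (x₀ : ℝ) : ℝ[X] :=
  ∑ i ∈ range (n + 1), C (iteratedDeriv i f x₀ / i.factorial) * (X - C x₀) ^ i

theorem eval_taylorPolynomial (f : ℝ → ℝ) (n : ℕ) (x₀ x : ℝ) :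
    (taylorPolynomial f n x₀).eval x =
      ∑ i ∈ range (n + 1), iteratedDeriv i f x₀ / i.factorial * (x - x₀) ^ i := by
  simp [taylorPolynomial, eval_finsetSum]

theorem eval_taylorPolynomial_self (f : ℝ → ℝ) (n : ℕ) (x₀ : ℝ) :
    (taylorPolynomial f n x₀).eval x₀ = f x₀ := by
  rw [eval_taylorPolynomial, sum_eq_single_of_mem 0 (mem_range.mpr n.succ_pos)]
  · simp
  · intro i _ hi
    simp [zero_pow hi]

theorem natDegree_taylorPolynomial_le (f : ℝ → ℝ) (n : ℕ) (x₀ : ℝ) :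
    (taylorPolynomial f n x₀).natDegree ≤ n := by
  refine natDegree_sum_le_of_forall_le _ _ fun i hi => (natDegree_C_mul_le _ _).trans ?_
  rw [natDegree_pow, natDegree_X_sub_C, mul_one]
  exact Nat.lt_succ_iff.mp (mem_range.mp hi)

theorem abs_sub_eval_taylorPolynomial_le {f : ℝ → ℝ} {n : ℕ} (hf : ContDiff ℝ (n + 1) f) {K : ℝ}
    (hK : ∀ t, |iteratedDeriv (n + 1) f t| ≤ K) (x₀ x : ℝ) :
    |f x - (taylorPolynomial f n x₀).eval x| ≤ K * |x - x₀| ^ (n + 1) / (n + 1).factorial := by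
  rcases eq_or_ne x₀ x with rfl | hx
  · simp [eval_taylorPolynomial_self]
  obtain ⟨ξ, -, hξ⟩ := taylor_mean_remainder_lagrange_iteratedDeriv hx hf.contDiffOn
  have htaylor : taylorWithinEval f n (Set.uIcc x₀ x) x₀ x = (taylorPolynomial f n x₀).eval x := by
    rw [taylor_within_apply, eval_taylorPolynomial]
    refine sum_congr rfl fun i hi => ?_
    have hi : (i : WithTop ℕ∞) ≤ n + 1 := by
      exact_mod_cast (Nat.lt_succ_iff.mp (mem_range.mp hi)).trans n.le_succ
    rw [iteratedDerivWithin_eq_iteratedDeriv (uniqueDiffOn_uIcc hx) ((hf.of_le hi).contDiffAt)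
      Set.left_mem_uIcc, smul_eq_mul]
    ring
  rw [← htaylor, hξ, abs_div, abs_mul, abs_pow, Nat.abs_cast]
  gcongr
  exact hK ξ

section ShiftSum

variable {φ : ℝ → ℝ} {L : ℝ}

theorem eq_zero_of_notMem_Icc_ceil_floor (hφ : ∀ x, x < 0 ∨ L < x → φ x = 0) {t : ℝ} {k : ℤ}
    (hk : k ∉ Icc ⌈t - L⌉ ⌊t⌋) : φ (t - k) = 0 := by
  rw [mem_Icc, Int.ceil_le, Int.le_floor, not_and_or, not_le, not_le] at hk
  exact hφ _ (by rcases hk with hk | hk <;> [right; left] <;> linarith)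

theorem card_Icc_ceil_floor_le (hL : 0 ≤ L) (t : ℝ) :
    ((Icc ⌈t - L⌉ ⌊t⌋).card : ℝ) ≤ L + 1 := by
  rw [Int.card_Icc]
  have hfloor := Int.floor_le t
  have hceil := Int.le_ceil (t - L)
  rcases le_total 0 (⌊t⌋ + 1 - ⌈t - L⌉) with h | h
  · rw [← Int.cast_natCast, Int.toNat_of_nonneg h]
    push_cast
    linarith
  · rw [Int.toNat_eq_zero.mpr h]
    push_cast
    linarith

theorem abs_tsum_mul_shift_sub_le (hL : 0 ≤ L) (hφ : ∀ x, x < 0 ∨ L < x → φ x = 0) {B : ℝ}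
    (hB : ∀ x, |φ x| ≤ B) {E : ℝ} (hE : 0 ≤ E) {t : ℝ} {a b : ℤ → ℝ}
    (hab : ∀ k : ℤ, |(k : ℝ) - t| ≤ L → |a k - b k| ≤ E) :
    |∑' k : ℤ, a k * φ (t - k) - ∑' k : ℤ, b k * φ (t - k)| ≤ (L + 1) * (E * B) := by
  set S := Icc ⌈t - L⌉ ⌊t⌋
  have hvanish (c : ℤ → ℝ) (k : ℤ) (hk : k ∉ S) : c k * φ (t - k) = 0 := by
    rw [eq_zero_of_notMem_Icc_ceil_floor hφ hk, mul_zero]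
  have hterm : ∀ k ∈ S, |a k * φ (t - k) - b k * φ (t - k)| ≤ E * B := by
    intro k hk
    rw [mem_Icc, Int.ceil_le, Int.le_floor] at hk
    rw [← sub_mul, abs_mul]
    exact mul_le_mul (hab k (abs_le.mpr ⟨by linarith, by linarith⟩)) (hB _) (abs_nonneg _) hE
  rw [tsum_eq_sum (hvanish a), tsum_eq_sum (hvanish b), ← sum_sub_distrib]
  calc |∑ k ∈ S, (a k * φ (t - k) - b k * φ (t - k))|
      ≤ ∑ k ∈ S, E * B := (abs_sum_le_sum_abs _ _).trans (sum_le_sum hterm)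
    _ = S.card * (E * B) := by rw [sum_const, nsmul_eq_mul]
    _ ≤ (L + 1) * (E * B) := by
        gcongr
        · exact mul_nonneg hE ((abs_nonneg _).trans (hB 0))
        · exact card_Icc_ceil_floor_le hL t

end ShiftSum

/-- N-th order error estimate: if `f ∈ Cᴺ` with bounded `N`-th derivative, and
the bounded, compactly supported `φ` reproduces polynomials of degree `≤ N−1`
through shifted samples, then `|f(x) − P̃^m f(x)| ≤ C·2^{−mN}` uniformly in `x`
and `m`, with `C` independent of `m`. -/
theorem wavelet_approximation_error_bound
    (N : ℕ) (hN : 0 < N) (M₁ : ℤ) (φ : ℝ → ℝ) (K B : ℝ)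
    (f : ℝ → ℝ) (hf : ContDiff ℝ N f)
    (hfK : ∀ x : ℝ, |iteratedDeriv N f x| ≤ K)
    (hφb : ∀ x : ℝ, |φ x| ≤ B)
    (hsupp : ∀ x : ℝ, x < 0 ∨ (3 * N : ℝ) - 1 < x → φ x = 0)
    (hrep : ∀ P : Polynomial ℝ, P.natDegree ≤ N - 1 → ∀ m : ℕ, ∀ x : ℝ,
      ∑' k : ℤ, P.eval (((M₁ : ℝ) + k) / 2 ^ m) * φ (2 ^ m * x - k)
        = P.eval x) :
    ∃ C : ℝ, ∀ m : ℕ, ∀ x : ℝ,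
      |f x - ∑' k : ℤ, f (((M₁ : ℝ) + k) / 2 ^ m) * φ (2 ^ m * x - k)|
        ≤ C * 2 ^ (-(m : ℝ) * N) := by
  obtain ⟨n, rfl⟩ := Nat.exists_eq_add_one_of_ne_zero hN.ne'
  set L : ℝ := 3 * ((n + 1 : ℕ) : ℝ) - 1
  have hL : 0 ≤ L := by push_cast [L]; linarith
  have hK : 0 ≤ K := (abs_nonneg _).trans (hfK 0)
  set A := |(M₁ : ℝ)| + L
  refine ⟨(L + 1) * (K * A ^ (n + 1) / (n + 1).factorial * B), fun m x => ?_⟩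
  set P := taylorPolynomial f n x
  have hP : ∑' k : ℤ, P.eval (((M₁ : ℝ) + k) / 2 ^ m) * φ (2 ^ m * x - k) = f x := by
    rw [hrep P (natDegree_taylorPolynomial_le f n x) m x, eval_taylorPolynomial_self]
  have h2m : (0 : ℝ) < 2 ^ m := by positivity
  have hsample (k : ℤ) (hk : |(k : ℝ) - 2 ^ m * x| ≤ L) :
      |((M₁ : ℝ) + k) / 2 ^ m - x| ≤ A / 2 ^ m := by
    rw [show ((M₁ : ℝ) + k) / 2 ^ m - x = (M₁ + (k - 2 ^ m * x)) / 2 ^ m by field_simp; ring,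
      abs_div, abs_of_pos h2m]
    gcongr
    exact (abs_add_le _ _).trans (by linarith)
  have hscale : (A / 2 ^ m) ^ (n + 1) = A ^ (n + 1) * 2 ^ (-(m : ℝ) * ((n + 1 : ℕ) : ℝ)) := by
    rw [neg_mul, Real.rpow_neg zero_le_two, ← Nat.cast_mul, Real.rpow_natCast, pow_mul, div_pow,
      div_eq_mul_inv]
  rw [← hP, abs_sub_comm]
  calc _ ≤ (L + 1) * (K * (A / 2 ^ m) ^ (n + 1) / (n + 1).factorial * B) := by
        refine abs_tsum_mul_shift_sub_le hL hsupp hφb (by positivity) fun k hk => ?_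
        refine (abs_sub_eval_taylorPolynomial_le (by exact_mod_cast hf) hfK x _).trans ?_
        gcongr
        exact hsample k hk
    _ = _ := by rw [hscale]; ring
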